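/- arXiv:2305.17342 — 2 statements merged into one kernel-verified Lean document; each statement's English description precedes it below -/
import Mathlib

section
/- (Lemma: Lipschitz gradient bound in the attacker block.) In a finite two-player Markov game with discount factor γ ∈ [0,1), initial distribution ρ, reward r : S × A_ν × A_α → [0,1], benign attacker policy π̂_α and ε_π ∈ [0,1], the function J_{ε_π}(ν, α) is differentiable at every point (ν, α) of the product of simplices Δ(A_ν)^{|S|} × Δ(A_α)^{|S|}, and its gradient with respect to the α-block satisfies ‖∇_α J_{ε_π}(ν, α)‖ ≤ ε_π √|A_α| / (1-γ)², where ‖·‖ is the Euclidean norm on ℝ^{S × A_α}. -/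
open scoped BigOperators RealInnerProductSpace
open Matrix

/-- The state-transition matrix induced by a joint policy. -/
noncomputable def inducedMatrix {S Av Aa : Type*} [Fintype Av] [Fintype Aa]
    (P : S → Av → Aa → S → ℝ) (pinu : S → Av → ℝ) (pialpha : S → Aa → ℝ) :
    Matrix S S ℝ :=
  Matrix.of fun s' s => ∑ av, ∑ aa, pinu s av * pialpha s aa * P s av aa s'

/-- The marginalized reward `r̄_{π_ν,π_α}(s)`. -/
noncomputable def marginalReward {S Av Aa : Type*} [Fintype Av] [Fintype Aa]
    (r : S → Av → Aa → ℝ) (pinu : S → Av → ℝ) (pialpha : S → Aa → ℝ) (s : S) : ℝ :=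
  ∑ av, ∑ aa, pinu s av * pialpha s aa * r s av aa

/-- The objective `J_{ε_π}(ν, α) = V_ρ(π_ν, (1-ε_π)π̂_α + ε_π π_α)` under direct
parameterization, extended near the simplices by the rational formula
`J = ⟨(I - γ P_{π_ν, π_α^mix})⁻¹ ρ, r̄⟩` (the value scaled by `1/(1-γ)` is recovered
as `(1/(1-γ))⟨d, r̄⟩`; here `⟨(I-γP)⁻¹ρ, r̄⟩ = ∑_t γ^t ⟨P^t ρ, r̄⟩` is the value). -/
noncomputable def Jobj {S Av Aa : Type*} [Fintype S] [DecidableEq S]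
    [Fintype Av] [Fintype Aa]
    (P : S → Av → Aa → S → ℝ) (r : S → Av → Aa → ℝ) (γ ε : ℝ)
    (ρ : S → ℝ) (pihat : S → Aa → ℝ)
    (ν : EuclideanSpace ℝ (S × Av)) (α : EuclideanSpace ℝ (S × Aa)) : ℝ :=
  ∑ s, (((1 - γ • inducedMatrix P (fun s a => ν (s, a))
        (fun s a => (1 - ε) * pihat s a + ε * α (s, a)))⁻¹ *ᵥ ρ) s) *
      marginalReward r (fun s a => ν (s, a))
        (fun s a => (1 - ε) * pihat s a + ε * α (s, a)) s

/-- Membership in the product of probability simplices `Δ(A)^{|S|}`, under direct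
parameterization as a Euclidean vector. -/
def inPolicySimplex {S A : Type*} [Fintype A]
    (x : EuclideanSpace ℝ (S × A)) : Prop :=
  (∀ p : S × A, 0 ≤ x p) ∧ ∀ s : S, ∑ a, x (s, a) = 1

/-!
At a point of the simplices the transition matrix `P = P_{π_ν, π_α^mix}` is column-stochastic, so
`A = 1 - γ P` is invertible, `A⁻¹ = ∑ γᵏ Pᵏ` is entrywise nonnegative and its columns sum to
`(1 - γ)⁻¹`. Hence `J = ⟨A⁻¹ ρ, r̄⟩` is differentiable. Both `A` and `r̄` are affine in `α` with
slope proportional to `ε`, and differentiating the inverse gives the policy-gradient formula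
`∂J/∂α(s, a) = ε d(s) Q(s, a)`, with occupancy `d = A⁻¹ ρ ≥ 0`, `∑ d = (1 - γ)⁻¹`, and action
value `Q(s, a) ∈ [0, (1 - γ)⁻¹]`. So `‖∇_α J‖² ≤ ε² |A_α| (1 - γ)⁻² ∑ d(s)² ≤ ε² |A_α| (1 - γ)⁻⁴`.
-/

-- In the `ℓ∞` operator norm a row-stochastic matrix has norm at most `1`.
attribute [local instance] Matrix.linftyOpNormedAddCommGroup Matrix.linftyOpNormedSpace
  Matrix.linftyOpNormedRing Matrix.linftyOpNormedAlgebra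

lemma sum_mul_mem_Icc {ι : Type*} [Fintype ι] {w f : ι → ℝ} {c : ℝ} (hw : ∀ i, 0 ≤ w i)
    (hf : ∀ i, f i ∈ Set.Icc 0 c) : ∑ i, w i * f i ∈ Set.Icc 0 (c * ∑ i, w i) := by
  refine ⟨Finset.sum_nonneg fun i _ => mul_nonneg (hw i) (hf i).1, ?_⟩
  rw [Finset.mul_sum]
  exact Finset.sum_le_sum fun i _ => by nlinarith [hw i, (hf i).2]

lemma sum_mul_mem_Icc_of_mem_stdSimplex {ι : Type*} [Fintype ι] {w f : ι → ℝ} {c : ℝ}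
    (hw : w ∈ stdSimplex ℝ ι) (hf : ∀ i, f i ∈ Set.Icc 0 c) :
    ∑ i, w i * f i ∈ Set.Icc 0 c := by
  simpa [hw.2] using sum_mul_mem_Icc hw.1 hf

namespace EuclideanSpace

noncomputable def curryCLM (ι κ : Type*) [Fintype ι] [Fintype κ] :
    EuclideanSpace ℝ (ι × κ) →L[ℝ] ι → κ → ℝ :=
  LinearMap.toContinuousLinearMap
    ((LinearEquiv.curry ℝ ℝ ι κ).toLinearMap ∘ₗ
      (WithLp.linearEquiv 2 ℝ (ι × κ → ℝ)).toLinearMap)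

variable {ι κ : Type*} [Fintype ι] [Fintype κ]

@[simp]
lemma curryCLM_apply (x : EuclideanSpace ℝ (ι × κ)) (i : ι) (k : κ) :
    curryCLM ι κ x i k = x (i, k) := rfl

lemma norm_le_sqrt_card_mul_sum (x : EuclideanSpace ℝ (ι × κ)) {c : ι → ℝ}
    (hc : ∀ i, 0 ≤ c i) (hx : ∀ i k, |x (i, k)| ≤ c i) :
    ‖x‖ ≤ √(Fintype.card κ) * ∑ i, c i := by
  have hsq : ∑ p : ι × κ, ‖x p‖ ^ 2 ≤ Fintype.card κ * (∑ i, c i) ^ 2 :=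
    calc ∑ p : ι × κ, ‖x p‖ ^ 2 ≤ ∑ p : ι × κ, c p.1 ^ 2 :=
          Finset.sum_le_sum fun ⟨i, k⟩ _ => by
            rw [Real.norm_eq_abs]
            exact pow_le_pow_left₀ (abs_nonneg _) (hx i k) 2
      _ = Fintype.card κ * ∑ i, c i ^ 2 := by
          simp [Fintype.sum_prod_type, Finset.mul_sum]
      _ ≤ Fintype.card κ * (∑ i, c i) ^ 2 :=
          mul_le_mul_of_nonneg_left
            (Finset.sum_sq_le_sq_sum_of_nonneg fun i _ => hc i) (Nat.cast_nonneg _)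
  rw [EuclideanSpace.norm_eq]
  calc √(∑ p, ‖x p‖ ^ 2) ≤ √(Fintype.card κ * (∑ i, c i) ^ 2) := Real.sqrt_le_sqrt hsq
    _ = √(Fintype.card κ) * ∑ i, c i := by
        rw [Real.sqrt_mul (Nat.cast_nonneg _),
          Real.sqrt_sq (Finset.sum_nonneg fun i _ => hc i)]

end EuclideanSpace

namespace Matrix

section Resolvent

variable {n : Type*} [Fintype n] [DecidableEq n] {M : Matrix n n ℝ} {γ : ℝ}

lemma linfty_opNorm_le_one_of_mem_rowStochastic (hM : M ∈ rowStochastic ℝ n) :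
    ‖M‖ ≤ 1 := by
  rw [linfty_opNorm_def, NNReal.coe_le_one]
  refine Finset.sup_le fun i _ => le_of_eq ?_
  rw [← NNReal.coe_inj]
  push_cast
  simp_rw [Real.norm_of_nonneg (nonneg_of_mem_rowStochastic hM)]
  exact sum_row_of_mem_rowStochastic hM i

lemma norm_smul_transpose_lt_one_of_mem_colStochastic (hM : M ∈ colStochastic ℝ n)
    (hγ0 : 0 ≤ γ) (hγ1 : γ < 1) : ‖γ • Mᵀ‖ < 1 :=
  calc ‖γ • Mᵀ‖ ≤ ‖γ‖ * ‖Mᵀ‖ := norm_smul_le _ _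
    _ ≤ γ * 1 := by
      rw [Real.norm_of_nonneg hγ0]
      exact mul_le_mul_of_nonneg_left (linfty_opNorm_le_one_of_mem_rowStochastic
        (transpose_mem_rowStochastic_iff_mem_colStochastic.mpr hM)) hγ0
    _ < 1 := by linarith

lemma isUnit_one_sub_smul_of_mem_colStochastic (hM : M ∈ colStochastic ℝ n) (hγ0 : 0 ≤ γ)
    (hγ1 : γ < 1) : IsUnit (1 - γ • M) := by
  rw [← isUnit_transpose, transpose_sub, transpose_one, transpose_smul]
  exact isUnit_one_sub_of_norm_lt_one
    (norm_smul_transpose_lt_one_of_mem_colStochastic hM hγ0 hγ1)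

lemma hasSum_pow_smul_of_mem_colStochastic (hM : M ∈ colStochastic ℝ n) (hγ0 : 0 ≤ γ)
    (hγ1 : γ < 1) : HasSum (fun k : ℕ => (γ • M) ^ k) (1 - γ • M)⁻¹ := by
  have h := (hasSum_geom_series_inverse _
    (norm_smul_transpose_lt_one_of_mem_colStochastic hM hγ0 hγ1)).matrix_transpose
  simpa [← nonsing_inv_eq_ringInverse, transpose_nonsing_inv, transpose_pow] using h

lemma inv_one_sub_smul_nonneg (hM : M ∈ colStochastic ℝ n) (hγ0 : 0 ≤ γ) (hγ1 : γ < 1)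
    (i j : n) : 0 ≤ (1 - γ • M)⁻¹ i j := by
  refine (Pi.hasSum.mp (Pi.hasSum.mp
    (hasSum_pow_smul_of_mem_colStochastic hM hγ0 hγ1) i) j).nonneg fun k => ?_
  rw [smul_pow]
  exact mul_nonneg (pow_nonneg hγ0 k) (nonneg_of_mem_colStochastic (pow_mem hM k))

lemma one_vecMul_inv_one_sub_smul (hM : M ∈ colStochastic ℝ n) (hγ0 : 0 ≤ γ) (hγ1 : γ < 1) :
    1 ᵥ* (1 - γ • M)⁻¹ = (1 - γ)⁻¹ • 1 := by
  have hdet :=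
    (isUnit_iff_isUnit_det _).mp (isUnit_one_sub_smul_of_mem_colStochastic hM hγ0 hγ1)
  have hrow : 1 ᵥ* (1 - γ • M) = (1 - γ) • 1 := by
    rw [vecMul_sub, vecMul_one, vecMul_smul, one_vecMul_of_mem_colStochastic hM, sub_smul,
      one_smul]
  calc 1 ᵥ* (1 - γ • M)⁻¹ = (1 - γ)⁻¹ • ((1 ᵥ* (1 - γ • M)) ᵥ* (1 - γ • M)⁻¹) := by
        rw [hrow, smul_vecMul, smul_smul, inv_mul_cancel₀ (by linarith), one_smul]
    _ = (1 - γ)⁻¹ • 1 := by rw [vecMul_vecMul, mul_nonsing_inv _ hdet, vecMul_one]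

end Resolvent

section Calculus

noncomputable def mulVecDotProductCLM {n : Type*} [Fintype n] (ρ : n → ℝ) :
    Matrix n n ℝ →L[ℝ] (n → ℝ) →L[ℝ] ℝ :=
  (LinearMap.mk₂ ℝ (fun X c => X *ᵥ ρ ⬝ᵥ c)
    (fun X Y c => by rw [add_mulVec, add_dotProduct])
    (fun a X c => by rw [smul_mulVec, smul_dotProduct])
    (fun X c c' => dotProduct_add _ _ _)
    (fun a X c => dotProduct_smul _ _ _)).toContinuousBilinearMap

variable {n : Type*} [Fintype n] [DecidableEq n]
  {E : Type*} [NormedAddCommGroup E] [NormedSpace ℝ E]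

lemma hasFDerivAt_inv {A : Matrix n n ℝ} (hA : IsUnit A) :
    HasFDerivAt (fun X : Matrix n n ℝ => X⁻¹)
      (-ContinuousLinearMap.mulLeftRight ℝ _ A⁻¹ A⁻¹) A := by
  have h := hasFDerivAt_ringInverse (𝕜 := ℝ) hA.unit
  simp only [IsUnit.unit_spec, coe_units_inv] at h
  rwa [show (fun X : Matrix n n ℝ => X⁻¹) = Ring.inverse from
    funext nonsing_inv_eq_ringInverse]

variable {M : E → Matrix n n ℝ} {M' : E →L[ℝ] Matrix n n ℝ} {b : E → n → ℝ}
  {b' : E →L[ℝ] n → ℝ} {x : E}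

lemma hasFDerivAt_inv_mulVec_dotProduct (ρ : n → ℝ) (hM : HasFDerivAt M M' x)
    (hb : HasFDerivAt b b' x) (hx : IsUnit (M x)) :
    HasFDerivAt (fun y => (M y)⁻¹ *ᵥ ρ ⬝ᵥ b y)
      ((mulVecDotProductCLM ρ).precompR E (M x)⁻¹ b' + (mulVecDotProductCLM ρ).precompL E
        ((-ContinuousLinearMap.mulLeftRight ℝ _ (M x)⁻¹ (M x)⁻¹).comp M') (b x)) x :=
  (mulVecDotProductCLM ρ).hasFDerivAt_of_bilinear ((hasFDerivAt_inv hx).comp x hM) hb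

lemma differentiableAt_inv_mulVec_dotProduct (ρ : n → ℝ) (hM : DifferentiableAt ℝ M x)
    (hb : DifferentiableAt ℝ b x) (hx : IsUnit (M x)) :
    DifferentiableAt ℝ (fun y => (M y)⁻¹ *ᵥ ρ ⬝ᵥ b y) x :=
  (hasFDerivAt_inv_mulVec_dotProduct ρ hM.hasFDerivAt hb.hasFDerivAt hx).differentiableAt

lemma fderiv_inv_mulVec_dotProduct (ρ : n → ℝ) (hM : HasFDerivAt M M' x)
    (hb : HasFDerivAt b b' x) (hx : IsUnit (M x)) (v : E) :
    fderiv ℝ (fun y => (M y)⁻¹ *ᵥ ρ ⬝ᵥ b y) x v =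
      (M x)⁻¹ *ᵥ ρ ⬝ᵥ b' v - b x ᵥ* (M x)⁻¹ ⬝ᵥ (M' v *ᵥ ((M x)⁻¹ *ᵥ ρ)) := by
  rw [(hasFDerivAt_inv_mulVec_dotProduct ρ hM hb hx).fderiv]
  change (M x)⁻¹ *ᵥ ρ ⬝ᵥ b' v + (-((M x)⁻¹ * M' v * (M x)⁻¹)) *ᵥ ρ ⬝ᵥ b x = _
  rw [neg_mulVec, neg_dotProduct, ← sub_eq_add_neg, ← mulVec_mulVec, ← mulVec_mulVec,
    dotProduct_comm _ (b x), dotProduct_mulVec]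

end Calculus

end Matrix

section MarkovGame

open EuclideanSpace

variable {S Av Aa : Type*} [Fintype S] [Fintype Av] [Fintype Aa]

noncomputable def inducedMatrixCLM (P : S → Av → Aa → S → ℝ) :
    (S → Av → ℝ) →L[ℝ] (S → Aa → ℝ) →L[ℝ] Matrix S S ℝ :=
  (LinearMap.mk₂ ℝ (inducedMatrix P)
    (fun _ _ _ => by ext; simp [inducedMatrix, add_mul, Finset.sum_add_distrib])
    (fun _ _ _ => by ext; simp [inducedMatrix, Finset.mul_sum, mul_assoc])
    (fun _ _ _ => by ext; simp [inducedMatrix, add_mul, mul_add, Finset.sum_add_distrib])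
    (fun _ _ _ => by ext; simp [inducedMatrix, Finset.mul_sum, mul_assoc, mul_left_comm])
    ).toContinuousBilinearMap

@[simp]
lemma inducedMatrixCLM_apply (P : S → Av → Aa → S → ℝ) (π₁ : S → Av → ℝ)
    (π₂ : S → Aa → ℝ) :
    inducedMatrixCLM P π₁ π₂ = inducedMatrix P π₁ π₂ := rfl

noncomputable def marginalRewardCLM (r : S → Av → Aa → ℝ) :
    (S → Av → ℝ) →L[ℝ] (S → Aa → ℝ) →L[ℝ] S → ℝ :=
  (LinearMap.mk₂ ℝ (marginalReward r)
    (fun _ _ _ => by ext; simp [marginalReward, add_mul, Finset.sum_add_distrib])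
    (fun _ _ _ => by ext; simp [marginalReward, Finset.mul_sum, mul_assoc])
    (fun _ _ _ => by ext; simp [marginalReward, add_mul, mul_add, Finset.sum_add_distrib])
    (fun _ _ _ => by ext; simp [marginalReward, Finset.mul_sum, mul_assoc, mul_left_comm])
    ).toContinuousBilinearMap

@[simp]
lemma marginalRewardCLM_apply (r : S → Av → Aa → ℝ) (π₁ : S → Av → ℝ)
    (π₂ : S → Aa → ℝ) :
    marginalRewardCLM r π₁ π₂ = marginalReward r π₁ π₂ := rfl

/-- The action value `Q(s, a)` of the attacker action `a`: one Bellman backup of the state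
values `w`, averaged over the victim's policy. -/
noncomputable def actionValue (P : S → Av → Aa → S → ℝ) (r : S → Av → Aa → ℝ) (γ : ℝ)
    (pinu : S → Av → ℝ) (w : S → ℝ) (s : S) (a : Aa) : ℝ :=
  ∑ av, pinu s av * (r s av a + γ * ∑ t, P s av a t * w t)

noncomputable def stateOccupancy [DecidableEq S] (P : S → Av → Aa → S → ℝ) (γ : ℝ)
    (ρ : S → ℝ) (pinu : S → Av → ℝ) (pia : S → Aa → ℝ) : S → ℝ :=
  (1 - γ • inducedMatrix P pinu pia)⁻¹ *ᵥ ρ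

noncomputable def stateValue [DecidableEq S] (P : S → Av → Aa → S → ℝ)
    (r : S → Av → Aa → ℝ) (γ : ℝ) (pinu : S → Av → ℝ) (pia : S → Aa → ℝ) : S → ℝ :=
  marginalReward r pinu pia ᵥ* (1 - γ • inducedMatrix P pinu pia)⁻¹

lemma Jobj_eq [DecidableEq S] (P : S → Av → Aa → S → ℝ) (r : S → Av → Aa → ℝ) (γ ε : ℝ)
    (ρ : S → ℝ) (pihat : S → Aa → ℝ) (ν : EuclideanSpace ℝ (S × Av))
    (α : EuclideanSpace ℝ (S × Aa)) :
    Jobj P r γ ε ρ pihat ν α =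
      (1 - γ • inducedMatrixCLM P (curryCLM S Av ν) ((1 - ε) • pihat + ε • curryCLM S Aa α))⁻¹
        *ᵥ ρ ⬝ᵥ marginalRewardCLM r (curryCLM S Av ν) ((1 - ε) • pihat + ε • curryCLM S Aa α) :=
  rfl

variable {P : S → Av → Aa → S → ℝ} {r : S → Av → Aa → ℝ} {pinu : S → Av → ℝ}
  {pia : S → Aa → ℝ} {γ : ℝ}

lemma inducedMatrix_mem_colStochastic [DecidableEq S]
    (hP : ∀ s av aa, P s av aa ∈ stdSimplex ℝ S) (hν : ∀ s, pinu s ∈ stdSimplex ℝ Av)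
    (hα : ∀ s, pia s ∈ stdSimplex ℝ Aa) : inducedMatrix P pinu pia ∈ colStochastic ℝ S := by
  refine mem_colStochastic.mpr ⟨fun i j => ?_, ?_⟩
  · exact Finset.sum_nonneg fun av _ => Finset.sum_nonneg fun aa _ =>
      mul_nonneg (mul_nonneg ((hν j).1 av) ((hα j).1 aa)) ((hP j av aa).1 i)
  · ext j
    simp only [vecMul, dotProduct, Pi.one_apply, one_mul, inducedMatrix, of_apply]
    rw [Finset.sum_comm]
    simp_rw [Finset.sum_comm (s := Finset.univ (α := S)), ← Finset.mul_sum, (hP _ _ _).2,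
      mul_one, ← Finset.mul_sum, (hα j).2, mul_one, (hν j).2]

omit [Fintype S] in
lemma marginalReward_mem_Icc (hr : ∀ s av aa, r s av aa ∈ Set.Icc 0 1)
    (hν : ∀ s, pinu s ∈ stdSimplex ℝ Av) (hα : ∀ s, pia s ∈ stdSimplex ℝ Aa) (s : S) :
    marginalReward r pinu pia s ∈ Set.Icc 0 1 := by
  simp only [marginalReward, mul_assoc, ← Finset.mul_sum]
  exact sum_mul_mem_Icc_of_mem_stdSimplex (hν s) fun av =>
    sum_mul_mem_Icc_of_mem_stdSimplex (hα s) fun aa => hr s av aa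

lemma sum_mul_actionValue_eq (w : S → ℝ) (σ : S → Aa → ℝ) (s : S) :
    ∑ a, σ s a * actionValue P r γ pinu w s a =
      marginalReward r pinu σ s + γ * (w ᵥ* inducedMatrix P pinu σ) s := by
  simp only [actionValue, marginalReward, vecMul, dotProduct, inducedMatrix, of_apply,
    Finset.mul_sum, mul_add, Finset.sum_add_distrib]
  congr 1
  · rw [Finset.sum_comm]
    exact Finset.sum_congr rfl fun _ _ => Finset.sum_congr rfl fun _ _ => by ring
  · conv_lhs => rw [Finset.sum_comm_cycle]
    refine Finset.sum_congr rfl fun _ _ => ?_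
    rw [Finset.sum_comm]
    exact Finset.sum_congr rfl fun _ _ => Finset.sum_congr rfl fun _ _ => by ring

lemma sum_mul_actionValue (w d : S → ℝ) (σ : S → Aa → ℝ) :
    ∑ s, ∑ a, σ s a * (d s * actionValue P r γ pinu w s a) =
      d ⬝ᵥ marginalReward r pinu σ + γ * (w ⬝ᵥ inducedMatrix P pinu σ *ᵥ d) :=
  calc ∑ s, ∑ a, σ s a * (d s * actionValue P r γ pinu w s a)
      = ∑ s, d s * (marginalReward r pinu σ s + γ * (w ᵥ* inducedMatrix P pinu σ) s) := by
        simp_rw [mul_left_comm (σ _ _), ← Finset.mul_sum, sum_mul_actionValue_eq]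
    _ = d ⬝ᵥ marginalReward r pinu σ + γ * (w ᵥ* inducedMatrix P pinu σ ⬝ᵥ d) := by
        simp only [dotProduct, mul_add, Finset.sum_add_distrib, Finset.mul_sum]
        exact congrArg _ (Finset.sum_congr rfl fun _ _ => by ring)
    _ = _ := by rw [dotProduct_mulVec]

omit [Fintype Aa] in
lemma actionValue_mem_Icc (hP : ∀ s av aa, P s av aa ∈ stdSimplex ℝ S)
    (hν : ∀ s, pinu s ∈ stdSimplex ℝ Av) (hr : ∀ s av aa, r s av aa ∈ Set.Icc 0 1)
    (hγ0 : 0 ≤ γ) (hγ1 : γ < 1) {w : S → ℝ} (hw : ∀ s, w s ∈ Set.Icc 0 (1 - γ)⁻¹)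
    (s : S) (a : Aa) : actionValue P r γ pinu w s a ∈ Set.Icc 0 (1 - γ)⁻¹ := by
  refine sum_mul_mem_Icc_of_mem_stdSimplex (hν s) fun av => ?_
  obtain ⟨hPw0, hPw1⟩ := sum_mul_mem_Icc_of_mem_stdSimplex (hP s av a) hw
  obtain ⟨hr0, hr1⟩ := hr s av a
  have hγ : 1 + γ * (1 - γ)⁻¹ = (1 - γ)⁻¹ := by
    field_simp [show 1 - γ ≠ 0 by linarith]
    ring
  constructor <;> nlinarith

variable [DecidableEq S]

section Bounds

variable (hM : inducedMatrix P pinu pia ∈ colStochastic ℝ S) (hγ0 : 0 ≤ γ) (hγ1 : γ < 1)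
include hM hγ0 hγ1

lemma stateOccupancy_nonneg {ρ : S → ℝ} (hρ : ∀ s, 0 ≤ ρ s) (s : S) :
    0 ≤ stateOccupancy P γ ρ pinu pia s :=
  Finset.sum_nonneg fun t _ => mul_nonneg (inv_one_sub_smul_nonneg hM hγ0 hγ1 s t) (hρ t)

lemma sum_stateOccupancy {ρ : S → ℝ} (hρ : ∑ s, ρ s = 1) :
    ∑ s, stateOccupancy P γ ρ pinu pia s = (1 - γ)⁻¹ := by
  have h := congrArg (· ⬝ᵥ ρ) (one_vecMul_inv_one_sub_smul hM hγ0 hγ1)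
  simp only [← dotProduct_mulVec, smul_dotProduct, one_dotProduct, hρ] at h
  simpa [stateOccupancy, one_dotProduct] using h

lemma stateValue_mem_Icc (hr : ∀ s, marginalReward r pinu pia s ∈ Set.Icc 0 1) (t : S) :
    stateValue P r γ pinu pia t ∈ Set.Icc 0 (1 - γ)⁻¹ := by
  have hcol := congrFun (one_vecMul_inv_one_sub_smul hM hγ0 hγ1) t
  simp only [vecMul, dotProduct, Pi.one_apply, one_mul, Pi.smul_apply, smul_eq_mul,
    mul_one] at hcol
  have h := sum_mul_mem_Icc (fun s => inv_one_sub_smul_nonneg hM hγ0 hγ1 s t) hr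
  simpa [stateValue, vecMul, dotProduct, hcol, mul_comm] using h

end Bounds

variable {ε : ℝ} {ρ : S → ℝ} {pihat : S → Aa → ℝ} {ν : EuclideanSpace ℝ (S × Av)}
  {α : EuclideanSpace ℝ (S × Aa)}

lemma differentiableAt_Jobj
    (hA : IsUnit (1 - γ • inducedMatrix P (curryCLM S Av ν)
      ((1 - ε) • pihat + ε • curryCLM S Aa α))) :
    DifferentiableAt ℝ (fun pr : EuclideanSpace ℝ (S × Av) × EuclideanSpace ℝ (S × Aa) =>
      Jobj P r γ ε ρ pihat pr.1 pr.2) (ν, α) := by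
  simp only [Jobj_eq]
  exact differentiableAt_inv_mulVec_dotProduct ρ (by fun_prop) (by fun_prop) hA

lemma hasGradientAt_Jobj_snd
    (hA : IsUnit (1 - γ • inducedMatrix P (curryCLM S Av ν)
      ((1 - ε) • pihat + ε • curryCLM S Aa α))) :
    HasGradientAt (fun α' => Jobj P r γ ε ρ pihat ν α')
      (ε • WithLp.toLp 2 fun p : S × Aa =>
        stateOccupancy P γ ρ (curryCLM S Av ν) ((1 - ε) • pihat + ε • curryCLM S Aa α) p.1 *
          actionValue P r γ (curryCLM S Av ν) (stateValue P r γ (curryCLM S Av ν)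
            ((1 - ε) • pihat + ε • curryCLM S Aa α)) p.1 p.2) α := by
  set πν := curryCLM S Av ν
  set π := (1 - ε) • pihat + ε • curryCLM S Aa α
  have hmix : HasFDerivAt (fun β => (1 - ε) • pihat + ε • curryCLM S Aa β)
      (ε • curryCLM S Aa) α :=
    ((curryCLM S Aa).hasFDerivAt.const_smul ε).const_add _
  have hM : HasFDerivAt (fun β => 1 - γ • inducedMatrixCLM P πν
      ((1 - ε) • pihat + ε • curryCLM S Aa β))
      (-(γ • (inducedMatrixCLM P πν).comp (ε • curryCLM S Aa))) α :=
    (((inducedMatrixCLM P πν).hasFDerivAt.comp α hmix).const_smul γ).const_sub 1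
  have hb : HasFDerivAt
      (fun β => marginalRewardCLM r πν ((1 - ε) • pihat + ε • curryCLM S Aa β))
      ((marginalRewardCLM r πν).comp (ε • curryCLM S Aa)) α :=
    (marginalRewardCLM r πν).hasFDerivAt.comp α hmix
  have hJ := (hasFDerivAt_inv_mulVec_dotProduct ρ hM hb hA).differentiableAt.hasFDerivAt
  refine (hasGradientAt_iff_hasFDerivAt.mpr <| hJ.congr_fderiv <|
    ContinuousLinearMap.ext fun v => ?_)
  have key := sum_mul_actionValue (P := P) (r := r) (γ := γ) (pinu := πν)
    (stateValue P r γ πν π) (stateOccupancy P γ ρ πν π) (curryCLM S Aa v)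
  simp only [stateOccupancy, stateValue, curryCLM_apply] at key
  rw [fderiv_inv_mulVec_dotProduct ρ hM hb hA, InnerProductSpace.toDual_apply_apply,
    real_inner_smul_left, PiLp.inner_apply, Fintype.sum_prod_type]
  simp only [stateOccupancy, stateValue, inducedMatrixCLM_apply, marginalRewardCLM_apply,
    ContinuousLinearMap.comp_apply, ContinuousLinearMap.comp_smulₛₗ, Real.ringHom_apply,
    _root_.smul_apply, _root_.neg_apply, smul_mulVec, neg_mulVec, dotProduct_smul,
    dotProduct_neg, smul_eq_mul, sub_neg_eq_add, RCLike.inner_apply, key]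
  ring

end MarkovGame

theorem attacker_gradient_bound_general {S Av Aa : Type*}
    [Fintype S] [DecidableEq S]
    [Fintype Av] [Fintype Aa]
    (P : S → Av → Aa → S → ℝ)
    (hP0 : ∀ s av aa s', 0 ≤ P s av aa s')
    (hP1 : ∀ s av aa, ∑ s', P s av aa s' = 1)
    (r : S → Av → Aa → ℝ)
    (hr0 : ∀ s av aa, 0 ≤ r s av aa) (hr1 : ∀ s av aa, r s av aa ≤ 1)
    (γ : ℝ) (hγ0 : 0 ≤ γ) (hγ1 : γ < 1)
    (ρ : S → ℝ) (hρ0 : ∀ s, 0 ≤ ρ s) (hρ1 : ∑ s, ρ s = 1)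
    (pihat : S → Aa → ℝ)
    (hpihat0 : ∀ s a, 0 ≤ pihat s a) (hpihat1 : ∀ s, ∑ a, pihat s a = 1)
    (ε : ℝ) (hε0 : 0 ≤ ε) (hε1 : ε ≤ 1)
    (ν : EuclideanSpace ℝ (S × Av)) (α : EuclideanSpace ℝ (S × Aa))
    (hν : inPolicySimplex ν) (hα : inPolicySimplex α) :
    DifferentiableAt ℝ
        (fun pr : EuclideanSpace ℝ (S × Av) × EuclideanSpace ℝ (S × Aa) =>
          Jobj P r γ ε ρ pihat pr.1 pr.2) (ν, α) ∧
      ‖gradient (fun α' => Jobj P r γ ε ρ pihat ν α') α‖ ≤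
        ε * Real.sqrt (Fintype.card Aa) / (1 - γ) ^ 2 := by
  set πν := EuclideanSpace.curryCLM S Av ν
  set π := (1 - ε) • pihat + ε • EuclideanSpace.curryCLM S Aa α
  have hP : ∀ s av aa, P s av aa ∈ stdSimplex ℝ S := fun s av aa => ⟨hP0 s av aa, hP1 s av aa⟩
  have hr : ∀ s av aa, r s av aa ∈ Set.Icc 0 1 := fun s av aa => ⟨hr0 s av aa, hr1 s av aa⟩
  have hπν : ∀ s, πν s ∈ stdSimplex ℝ Av := fun s => ⟨fun a => hν.1 (s, a), hν.2 s⟩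
  have hπ : ∀ s, π s ∈ stdSimplex ℝ Aa := fun s =>
    convex_stdSimplex ℝ Aa ⟨hpihat0 s, hpihat1 s⟩ ⟨fun a => hα.1 (s, a), hα.2 s⟩
      (by linarith) hε0 (by ring)
  have hM := inducedMatrix_mem_colStochastic hP hπν hπ
  have hA := isUnit_one_sub_smul_of_mem_colStochastic hM hγ0 hγ1
  refine ⟨differentiableAt_Jobj hA, ?_⟩
  have hd := stateOccupancy_nonneg hM hγ0 hγ1 hρ0
  have hQ := actionValue_mem_Icc hP hπν hr hγ0 hγ1
    (stateValue_mem_Icc hM hγ0 hγ1 (marginalReward_mem_Icc hr hπν hπ))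
  rw [(hasGradientAt_Jobj_snd hA).gradient, norm_smul, Real.norm_of_nonneg hε0]
  calc ε * ‖_‖
      ≤ ε * (√(Fintype.card Aa) * ∑ s, stateOccupancy P γ ρ πν π s * (1 - γ)⁻¹) := by
        refine mul_le_mul_of_nonneg_left (EuclideanSpace.norm_le_sqrt_card_mul_sum _
          (fun s => mul_nonneg (hd s) (by simp only [inv_nonneg]; linarith))
          fun s a => ?_) hε0
        rw [abs_of_nonneg (mul_nonneg (hd s) (hQ s a).1)]
        exact mul_le_mul_of_nonneg_left (hQ s a).2 (hd s)
    _ = ε * Real.sqrt (Fintype.card Aa) / (1 - γ) ^ 2 := by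
        rw [← Finset.sum_mul, sum_stateOccupancy hM hγ0 hγ1 hρ1]
        field_simp

/-- Lipschitz gradient bound in the attacker block:
`J_{ε_π}` is differentiable at every point of the product of simplices and
`‖∇_α J_{ε_π}(ν, α)‖ ≤ ε_π √|A_α| / (1-γ)²`. -/
theorem attacker_gradient_bound {S Av Aa : Type*}
    [Fintype S] [Nonempty S] [DecidableEq S]
    [Fintype Av] [Nonempty Av] [Fintype Aa] [Nonempty Aa]
    (P : S → Av → Aa → S → ℝ)
    (hP0 : ∀ s av aa s', 0 ≤ P s av aa s')
    (hP1 : ∀ s av aa, ∑ s', P s av aa s' = 1)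
    (r : S → Av → Aa → ℝ)
    (hr0 : ∀ s av aa, 0 ≤ r s av aa) (hr1 : ∀ s av aa, r s av aa ≤ 1)
    (γ : ℝ) (hγ0 : 0 ≤ γ) (hγ1 : γ < 1)
    (ρ : S → ℝ) (hρ0 : ∀ s, 0 ≤ ρ s) (hρ1 : ∑ s, ρ s = 1)
    (pihat : S → Aa → ℝ)
    (hpihat0 : ∀ s a, 0 ≤ pihat s a) (hpihat1 : ∀ s, ∑ a, pihat s a = 1)
    (ε : ℝ) (hε0 : 0 ≤ ε) (hε1 : ε ≤ 1)
    (ν : EuclideanSpace ℝ (S × Av)) (α : EuclideanSpace ℝ (S × Aa))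
    (hν : inPolicySimplex ν) (hα : inPolicySimplex α) :
    DifferentiableAt ℝ
        (fun pr : EuclideanSpace ℝ (S × Av) × EuclideanSpace ℝ (S × Aa) =>
          Jobj P r γ ε ρ pihat pr.1 pr.2) (ν, α) ∧
      ‖gradient (fun α' => Jobj P r γ ε ρ pihat ν α') α‖ ≤
        ε * Real.sqrt (Fintype.card Aa) / (1 - γ) ^ 2 :=
  attacker_gradient_bound_general P hP0 hP1 r hr0 hr1 γ hγ0 hγ1 ρ hρ0 hρ1 pihat hpihat0 hpihat1 ε
    hε0 hε1 ν α hν hα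
end

section
/- (Lemma: gradient domination for the attacker.) In a finite two-player Markov game with discount γ ∈ [0,1), reward r : S × A_ν × A_α → [0,1], initial distribution ρ with ρ(s) > 0 for all s, benign attacker policy π̂_α, and ε_π ∈ [0,1]: for any (ν, α) in the product of simplices Δ(A_ν)^{|S|} × Δ(A_α)^{|S|} and any α* ∈ Δ(A_α)^{|S|} minimizing α' ↦ J_{ε_π}(ν, α') over Δ(A_α)^{|S|}, one has J_{ε_π}(ν, α) - min_{α' ∈ Δ(A_α)^{|S|}} J_{ε_π}(ν, α') ≤ (1/(1-γ)) · max_{s ∈ S} (d_ρ^{π_ν, (1-ε_π)π̂_α + ε_π π_{α*}}(s) / ρ(s)) · max_{ᾱ ∈ Δ(A_α)^{|S|}} ⟨∇_α J_{ε_π}(ν, α), α - ᾱ⟩. -/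
open scoped BigOperators RealInnerProductSpace
open Matrix

/-- The stationary state visitation `d_ρ = (1-γ) ∑_t γ^t P^t ρ`. -/
noncomputable def stateVisitation {S Av Aa : Type*} [Fintype S] [DecidableEq S]
    [Fintype Av] [Fintype Aa]
    (P : S → Av → Aa → S → ℝ) (γ : ℝ) (ρ : S → ℝ)
    (pinu : S → Av → ℝ) (pialpha : S → Aa → ℝ) : S → ℝ :=
  (1 - γ) • ∑' t : ℕ, γ ^ t • ((inducedMatrix P pinu pialpha ^ t) *ᵥ ρ)

/-!
Write `d_β = (I - γ P_β)⁻¹ ρ` for the discounted occupancy of the mixed attacker policy `β`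
(so `d_ρ^β = (1 - γ) d_β`) and `Q` for the attacker's Q-function against `ν` and
`β = mix α`. The performance-difference lemma gives
`J(α) - J(α*) = ε ∑_s d_{α*}(s) ∑_a (α - α*)(s, a) Q(s, a)`, and differentiating the resolvent
gives the policy-gradient formula `⟨∇_α J(α), v⟩ = ε ∑_s d_α(s) ∑_a v(s, a) Q(s, a)`.
Replacing `α*` by the policy `ᾱ` that is greedy for `Q` can only enlarge each inner sum and makes
it nonnegative, and `d_{α*} ≤ C ρ ≤ C d_α` with `C = max_s d_{α*}(s) / ρ(s)`; hence the
difference is at most `C ⟨∇_α J(α), α - ᾱ⟩`.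
-/

namespace Matrix

variable {n : Type*} [Fintype n] [DecidableEq n] {M : Matrix n n ℝ} {γ : ℝ}

theorem summable_geometric_of_mem_colStochastic (hM : M ∈ colStochastic ℝ n) (hγ0 : 0 ≤ γ)
    (hγ1 : γ < 1) : Summable fun t : ℕ => γ ^ t • M ^ t := by
  refine Pi.summable.2 fun i => Pi.summable.2 fun j => ?_
  refine (summable_geometric_of_lt_one hγ0 hγ1).of_nonneg_of_le (fun t => ?_) (fun t => ?_)
  · exact mul_nonneg (pow_nonneg hγ0 t) (nonneg_of_mem_colStochastic (pow_mem hM t))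
  · exact mul_le_of_le_one_right (pow_nonneg hγ0 t) (le_one_of_mem_colStochastic (pow_mem hM t))

theorem one_sub_smul_mul_tsum_geometric (hM : M ∈ colStochastic ℝ n) (hγ0 : 0 ≤ γ)
    (hγ1 : γ < 1) : (1 - γ • M) * ∑' t : ℕ, γ ^ t • M ^ t = 1 := by
  have hs := summable_geometric_of_mem_colStochastic hM hγ0 hγ1
  have hshift : ∑' t : ℕ, γ ^ t • M ^ t = 1 + γ • M * ∑' t : ℕ, γ ^ t • M ^ t := by
    rw [← hs.tsum_mul_left, hs.tsum_eq_zero_add]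
    simp [pow_succ', smul_smul, mul_comm]
  rw [sub_mul, one_mul]
  nth_rw 1 [hshift]
  abel

theorem isUnit_det_one_sub_smul_of_mem_colStochastic (hM : M ∈ colStochastic ℝ n)
    (hγ0 : 0 ≤ γ) (hγ1 : γ < 1) : IsUnit (1 - γ • M).det :=
  isUnit_det_of_right_inverse (one_sub_smul_mul_tsum_geometric hM hγ0 hγ1)

theorem hasSum_geometric_mulVec_of_mem_colStochastic (hM : M ∈ colStochastic ℝ n)
    (hγ0 : 0 ≤ γ) (hγ1 : γ < 1) (ρ : n → ℝ) :
    HasSum (fun t : ℕ => γ ^ t • (M ^ t *ᵥ ρ)) ((1 - γ • M)⁻¹ *ᵥ ρ) := by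
  rw [inv_eq_right_inv (one_sub_smul_mul_tsum_geometric hM hγ0 hγ1)]
  refine ((summable_geometric_of_mem_colStochastic hM hγ0 hγ1).hasSum.map
    (mulVec.addMonoidHomLeft ρ) (continuous_id.matrix_mulVec continuous_const)).congr_fun
    fun t => ?_
  simp [mulVec.addMonoidHomLeft, smul_mulVec]

theorem le_inv_one_sub_smul_mulVec_of_mem_colStochastic (hM : M ∈ colStochastic ℝ n)
    (hγ0 : 0 ≤ γ) (hγ1 : γ < 1) {ρ : n → ℝ} (hρ : ∀ i, 0 ≤ ρ i) (i : n) :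
    ρ i ≤ ((1 - γ • M)⁻¹ *ᵥ ρ) i := by
  have hsum := Pi.hasSum.1 (hasSum_geometric_mulVec_of_mem_colStochastic hM hγ0 hγ1 ρ) i
  simpa using le_hasSum hsum 0 fun t _ =>
    mul_nonneg (pow_nonneg hγ0 t) (nonneg_mulVec_of_mem_colStochastic (pow_mem hM t) hρ i)

end Matrix

section ResolventDerivative

-- Any normed-algebra structure on matrices will do: it only serves `hasFDerivAt_ringInverse`.
attribute [local instance] Matrix.linftyOpNormedRing Matrix.linftyOpNormedAlgebra

variable {n E : Type*} [Fintype n] [DecidableEq n] [NormedAddCommGroup E] [NormedSpace ℝ E]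

theorem fderiv_inv_mulVec_dotProduct {A : E → Matrix n n ℝ} {A' : E →L[ℝ] Matrix n n ℝ}
    {g : E → n → ℝ} {g' : E →L[ℝ] n → ℝ} {x : E} (hA : HasFDerivAt A A' x)
    (hg : HasFDerivAt g g' x) (hdet : IsUnit (A x).det) (ρ : n → ℝ) (v : E) :
    fderiv ℝ (fun y => (A y)⁻¹ *ᵥ ρ ⬝ᵥ g y) x v =
      (A x)⁻¹ *ᵥ ρ ⬝ᵥ g' v - (g x ᵥ* (A x)⁻¹) ⬝ᵥ (A' v *ᵥ ((A x)⁻¹ *ᵥ ρ)) := by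
  obtain ⟨U, hU⟩ := (isUnit_iff_isUnit_det _).2 hdet
  have hinv : HasFDerivAt (fun y => (A y)⁻¹)
      (-(ContinuousLinearMap.mulLeftRight ℝ _ ↑U⁻¹ ↑U⁻¹) ∘L A') x := by
    have h := hasFDerivAt_ringInverse (𝕜 := ℝ) U
    rw [hU] at h
    simp_rw [nonsing_inv_eq_ringInverse]
    exact h.comp x hA
  let mulVecCLM : Matrix n n ℝ →L[ℝ] n → ℝ := (mulVec.addMonoidHomLeft ρ).toRealLinearMap
    (continuous_id.matrix_mulVec continuous_const)
  have hd : HasFDerivAt (fun y => (A y)⁻¹ *ᵥ ρ) _ x := mulVecCLM.hasFDerivAt.comp x hinv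
  have hdv : (mulVecCLM ∘L (-(ContinuousLinearMap.mulLeftRight ℝ _ ↑U⁻¹ ↑U⁻¹) ∘L A')) v =
      -((A x)⁻¹ *ᵥ (A' v *ᵥ ((A x)⁻¹ *ᵥ ρ))) := by
    change (-((↑U⁻¹ : Matrix n n ℝ) * A' v * (↑U⁻¹ : Matrix n n ℝ))) *ᵥ ρ = _
    rw [coe_units_inv, hU, neg_mulVec, mulVec_mulVec, mulVec_mulVec]
  have hJ : HasFDerivAt (fun y => ∑ i, ((A y)⁻¹ *ᵥ ρ) i * g y i) _ x :=
    HasFDerivAt.fun_sum fun i _ => (hasFDerivAt_pi'.1 hd i).mul (hasFDerivAt_pi'.1 hg i)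
  rw [show (fun y => (A y)⁻¹ *ᵥ ρ ⬝ᵥ g y) = fun y => ∑ i, ((A y)⁻¹ *ᵥ ρ) i * g y i from rfl,
    hJ.fderiv]
  simp only [_root_.sum_apply, _root_.add_apply, _root_.smul_apply, ContinuousLinearMap.comp_apply,
    ContinuousLinearMap.proj_apply, smul_eq_mul, Finset.sum_add_distrib]
  erw [hdv]
  simp only [Pi.neg_apply, mul_neg, Finset.sum_neg_distrib, ← sub_eq_add_neg, ← dotProduct_mulVec]
  rfl

end ResolventDerivative

theorem sum_mul_le_sup'_div_mul {ι : Type*} [Fintype ι] [Nonempty ι] {d d' ρ f g : ι → ℝ} {B : ℝ}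
    (hρ : ∀ i, 0 < ρ i) (hd : ∀ i, 0 ≤ d i) (hρd' : ∀ i, ρ i ≤ d' i) (hfg : ∀ i, f i ≤ g i)
    (hg : ∀ i, 0 ≤ g i) (hB : ∑ i, d' i * g i ≤ B) :
    ∑ i, d i * f i ≤ (Finset.univ.sup' Finset.univ_nonempty fun i => d i / ρ i) * B := by
  set C := Finset.univ.sup' Finset.univ_nonempty fun i => d i / ρ i
  have hdC : ∀ i, d i ≤ C * ρ i := fun i =>
    (div_le_iff₀ (hρ i)).1 (Finset.le_sup' (fun i => d i / ρ i) (Finset.mem_univ i))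
  have hC : 0 ≤ C := Finset.le_sup'_of_le _ (Finset.mem_univ (Classical.arbitrary ι))
    (div_nonneg (hd _) (hρ _).le)
  calc ∑ i, d i * f i ≤ ∑ i, C * (d' i * g i) := Finset.sum_le_sum fun i _ => calc
        d i * f i ≤ d i * g i := mul_le_mul_of_nonneg_left (hfg i) (hd i)
        _ ≤ (C * ρ i) * g i := mul_le_mul_of_nonneg_right (hdC i) (hg i)
        _ ≤ C * (d' i * g i) := by
          rw [mul_assoc]
          exact mul_le_mul_of_nonneg_left (mul_le_mul_of_nonneg_right (hρd' i) (hg i)) hC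
    _ ≤ C * B := by rw [← Finset.mul_sum]; exact mul_le_mul_of_nonneg_left hB hC

theorem inPolicySimplex.apply_le_one {S A : Type*} [Fintype A] {x : EuclideanSpace ℝ (S × A)}
    (hx : inPolicySimplex x) (p : S × A) : x p ≤ 1 :=
  (hx.2 p.1) ▸ Finset.single_le_sum (f := fun a => x (p.1, a)) (fun _ _ => hx.1 _)
    (Finset.mem_univ p.2)

theorem bddAbove_inner_sub_image_policySimplex {S A : Type*} [Fintype S] [Fintype A]
    (g y : EuclideanSpace ℝ (S × A)) :
    BddAbove ((fun x => ⟪g, y - x⟫) '' {x | inPolicySimplex x}) := by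
  refine ⟨∑ p, |g p| * (|y p| + 1), ?_⟩
  rintro _ ⟨x, hx, rfl⟩
  simp only [PiLp.inner_apply, PiLp.sub_apply, RCLike.inner_apply, conj_trivial]
  refine Finset.sum_le_sum fun p _ => ?_
  calc (y p - x p) * g p ≤ |g p| * |y p - x p| := by rw [mul_comm, ← abs_mul]; exact le_abs_self _
    _ ≤ |g p| * (|y p| + 1) := by
      refine mul_le_mul_of_nonneg_left ((abs_sub _ _).trans ?_) (abs_nonneg _)
      rw [abs_of_nonneg (hx.1 p)]
      linarith [hx.apply_le_one p]

theorem exists_greedy_policy {S A : Type*} [Fintype A] [Nonempty A] (Q : S → A → ℝ) :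
    ∃ x : EuclideanSpace ℝ (S × A), inPolicySimplex x ∧ ∀ y, inPolicySimplex y →
      ∀ s, ∑ a, x (s, a) * Q s a ≤ ∑ a, y (s, a) * Q s a := by
  classical
  choose a₀ ha₀ using fun s => Finset.exists_min_image Finset.univ (Q s) Finset.univ_nonempty
  refine ⟨WithLp.toLp 2 fun p => if p.2 = a₀ p.1 then 1 else 0, ⟨fun p => ?_, fun s => ?_⟩,
    fun y hy s => ?_⟩
  · dsimp only; split_ifs <;> norm_num
  · simp
  · simp only [ite_mul, one_mul, zero_mul, Finset.sum_ite_eq', Finset.mem_univ, if_true]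
    calc Q s (a₀ s) = ∑ a, y (s, a) * Q s (a₀ s) := by rw [← Finset.sum_mul, hy.2 s, one_mul]
      _ ≤ ∑ a, y (s, a) * Q s a := Finset.sum_le_sum fun a _ =>
          mul_le_mul_of_nonneg_left ((ha₀ s).2 a (Finset.mem_univ a)) (hy.1 _)

noncomputable section

variable {S Av Aa : Type*}

def IsPolicy {A : Type*} [Fintype A] (π : S → A → ℝ) : Prop :=
  (∀ s a, 0 ≤ π s a) ∧ ∀ s, ∑ a, π s a = 1

theorem IsPolicy.mix {A : Type*} [Fintype A] {π π' : S → A → ℝ} (hπ : IsPolicy π)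
    (hπ' : IsPolicy π') {ε : ℝ} (hε0 : 0 ≤ ε) (hε1 : ε ≤ 1) :
    IsPolicy fun s a => (1 - ε) * π s a + ε * π' s a := by
  refine ⟨fun s a => ?_, fun s => ?_⟩
  · have := hπ.1 s a; have := hπ'.1 s a; positivity
  · simp [Finset.sum_add_distrib, ← Finset.mul_sum, hπ.2 s, hπ'.2 s]

def policyOf {A : Type*} : EuclideanSpace ℝ (S × A) →ₗ[ℝ] S → A → ℝ where
  toFun x s a := x (s, a)
  map_add' _ _ := rfl
  map_smul' _ _ := rfl

theorem inPolicySimplex.isPolicy {A : Type*} [Fintype A] {x : EuclideanSpace ℝ (S × A)}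
    (hx : inPolicySimplex x) : IsPolicy (policyOf x) :=
  ⟨fun s a => hx.1 (s, a), hx.2⟩

def mixedPolicy (ε : ℝ) (pihat : S → Aa → ℝ) (x : EuclideanSpace ℝ (S × Aa)) : S → Aa → ℝ :=
  fun s a => (1 - ε) * pihat s a + ε * x (s, a)

theorem mixedPolicy_eq_add_smul (ε : ℝ) (pihat : S → Aa → ℝ) (x : EuclideanSpace ℝ (S × Aa)) :
    mixedPolicy ε pihat x = (1 - ε) • pihat + ε • policyOf x :=
  rfl

variable [Fintype S] [Fintype Av] [Fintype Aa]
  (P : S → Av → Aa → S → ℝ) (r : S → Av → Aa → ℝ) (γ : ℝ) (ρ : S → ℝ) (pinu : S → Av → ℝ)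

def inducedMatrixₗ : (S → Aa → ℝ) →ₗ[ℝ] Matrix S S ℝ where
  toFun := inducedMatrix P pinu
  map_add' β β' := by
    ext; simp [inducedMatrix, mul_add, add_mul, Finset.sum_add_distrib]
  map_smul' c β := by
    ext; simp [inducedMatrix, Finset.mul_sum, mul_assoc, mul_left_comm]

def marginalRewardₗ : (S → Aa → ℝ) →ₗ[ℝ] S → ℝ where
  toFun := marginalReward r pinu
  map_add' β β' := by
    ext; simp [marginalReward, mul_add, add_mul, Finset.sum_add_distrib]
  map_smul' c β := by
    ext; simp [marginalReward, Finset.mul_sum, mul_assoc, mul_left_comm]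

def qFunction (W : S → ℝ) (s : S) (a : Aa) : ℝ :=
  ∑ av, pinu s av * (r s av a + γ * ∑ s', P s av a s' * W s')

theorem marginalReward_add_vecMul_inducedMatrix (β : S → Aa → ℝ) (W : S → ℝ) (s : S) :
    marginalReward r pinu β s + γ * (W ᵥ* inducedMatrix P pinu β) s =
      ∑ a, β s a * qFunction P r γ pinu W s a := by
  simp only [marginalReward, qFunction, vecMul, dotProduct, inducedMatrix, of_apply,
    Finset.mul_sum, mul_add, Finset.sum_add_distrib]
  congr 1
  · rw [Finset.sum_comm]
    exact Finset.sum_congr rfl fun a _ => Finset.sum_congr rfl fun av _ => by ring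
  · rw [Finset.sum_comm]
    conv_rhs => rw [Finset.sum_comm]
    refine Finset.sum_congr rfl fun av _ => ?_
    rw [Finset.sum_comm]
    exact Finset.sum_congr rfl fun a _ => Finset.sum_congr rfl fun s' _ => by ring

theorem hasFDerivAt_comp_mixedPolicy {F : Type*} [NormedAddCommGroup F] [NormedSpace ℝ F]
    (Φ : (S → Aa → ℝ) →ₗ[ℝ] F) (ε : ℝ) (pihat : S → Aa → ℝ) (x : EuclideanSpace ℝ (S × Aa)) :
    HasFDerivAt (fun y => Φ (mixedPolicy ε pihat y))
      (ε • LinearMap.toContinuousLinearMap (Φ ∘ₗ policyOf)) x := by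
  have haffine : (fun y => Φ (mixedPolicy ε pihat y)) =
      fun y => Φ ((1 - ε) • pihat) + ε • LinearMap.toContinuousLinearMap (Φ ∘ₗ policyOf) y := by
    ext1 y
    simp [mixedPolicy_eq_add_smul]
  rw [haffine]
  exact ((ContinuousLinearMap.hasFDerivAt _).const_smul ε).const_add _

variable [DecidableEq S]

def occupancy (β : S → Aa → ℝ) : S → ℝ :=
  (1 - γ • inducedMatrix P pinu β)⁻¹ *ᵥ ρ

def value (β : S → Aa → ℝ) : S → ℝ :=
  marginalReward r pinu β ᵥ* (1 - γ • inducedMatrix P pinu β)⁻¹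

theorem occupancy_dotProduct_marginalReward (β : S → Aa → ℝ) :
    occupancy P γ ρ pinu β ⬝ᵥ marginalReward r pinu β = ρ ⬝ᵥ value P r γ pinu β := by
  rw [occupancy, value, dotProduct_comm, dotProduct_mulVec, dotProduct_comm]

def attackerQ (ε : ℝ) (pihat : S → Aa → ℝ) (ν : EuclideanSpace ℝ (S × Av))
    (α : EuclideanSpace ℝ (S × Aa)) : S → Aa → ℝ :=
  qFunction P r γ (policyOf ν) (value P r γ (policyOf ν) (mixedPolicy ε pihat α))

variable {P γ pinu}

theorem inducedMatrix_mem_colStochastic_s17 (hP0 : ∀ s av aa s', 0 ≤ P s av aa s')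
    (hP1 : ∀ s av aa, ∑ s', P s av aa s' = 1) {β : S → Aa → ℝ} (hpinu : IsPolicy pinu)
    (hβ : IsPolicy β) : inducedMatrix P pinu β ∈ colStochastic ℝ S := by
  refine mem_colStochastic_iff_sum.2 ⟨fun s' s => ?_, fun s => ?_⟩
  · exact Finset.sum_nonneg fun av _ => Finset.sum_nonneg fun aa _ =>
      mul_nonneg (mul_nonneg (hpinu.1 s av) (hβ.1 s aa)) (hP0 s av aa s')
  · simp only [inducedMatrix, of_apply]
    rw [Finset.sum_comm]
    simp [Finset.sum_comm (γ := S), ← Finset.mul_sum, hP1, hβ.2, hpinu.2]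

theorem value_vecMul_one_sub_smul {β : S → Aa → ℝ}
    (hdet : IsUnit (1 - γ • inducedMatrix P pinu β).det) :
    value P r γ pinu β ᵥ* (1 - γ • inducedMatrix P pinu β) = marginalReward r pinu β := by
  rw [value, vecMul_vecMul, nonsing_inv_mul _ hdet, vecMul_one]

theorem value_eq_sum_mul_qFunction {β : S → Aa → ℝ}
    (hdet : IsUnit (1 - γ • inducedMatrix P pinu β).det) (s : S) :
    value P r γ pinu β s = ∑ a, β s a * qFunction P r γ pinu (value P r γ pinu β) s a := by
  rw [← marginalReward_add_vecMul_inducedMatrix, ← value_vecMul_one_sub_smul r hdet]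
  simp [vecMul_sub, vecMul_smul]

theorem performance_difference {β β' : S → Aa → ℝ}
    (hdet : IsUnit (1 - γ • inducedMatrix P pinu β).det)
    (hdet' : IsUnit (1 - γ • inducedMatrix P pinu β').det) :
    ρ ⬝ᵥ value P r γ pinu β - ρ ⬝ᵥ value P r γ pinu β' =
      occupancy P γ ρ pinu β' ⬝ᵥ fun s =>
        ∑ a, (β s a - β' s a) * qFunction P r γ pinu (value P r γ pinu β) s a := by
  set A' := 1 - γ • inducedMatrix P pinu β'
  set g : S → ℝ := fun s => ∑ a, (β s a - β' s a) * qFunction P r γ pinu (value P r γ pinu β) s a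
  -- The Bellman equations of `β` and `β'` turn the value gap into a one-step advantage.
  have hgap : (value P r γ pinu β - value P r γ pinu β') ᵥ* A' = g := by
    ext s
    have h := marginalReward_add_vecMul_inducedMatrix P r γ pinu β' (value P r γ pinu β) s
    rw [sub_vecMul, value_vecMul_one_sub_smul r hdet', vecMul_sub, vecMul_one, vecMul_smul]
    simp only [g, Pi.sub_apply, Pi.smul_apply, smul_eq_mul, sub_mul, Finset.sum_sub_distrib]
    rw [value_eq_sum_mul_qFunction r hdet s]
    linarith
  have hval : value P r γ pinu β - value P r γ pinu β' = g ᵥ* A'⁻¹ := by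
    rw [← hgap, vecMul_vecMul, mul_nonsing_inv _ hdet', vecMul_one]
  rw [← dotProduct_sub, hval, dotProduct_comm, ← dotProduct_mulVec, dotProduct_comm]
  rfl

variable {r ρ} {ε : ℝ} {pihat : S → Aa → ℝ} {ν : EuclideanSpace ℝ (S × Av)}

theorem stateVisitation_eq_smul_occupancy {β : S → Aa → ℝ}
    (hM : inducedMatrix P pinu β ∈ colStochastic ℝ S) (hγ0 : 0 ≤ γ) (hγ1 : γ < 1) :
    stateVisitation P γ ρ pinu β = (1 - γ) • occupancy P γ ρ pinu β := by
  rw [stateVisitation, (hasSum_geometric_mulVec_of_mem_colStochastic hM hγ0 hγ1 ρ).tsum_eq]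
  rfl

theorem Jobj_eq_dotProduct_value (x : EuclideanSpace ℝ (S × Aa)) :
    Jobj P r γ ε ρ pihat ν x = ρ ⬝ᵥ value P r γ (policyOf ν) (mixedPolicy ε pihat x) :=
  occupancy_dotProduct_marginalReward P r γ ρ _ _

theorem Jobj_sub_Jobj {α α' : EuclideanSpace ℝ (S × Aa)}
    (hdet : IsUnit (1 - γ • inducedMatrix P (policyOf ν) (mixedPolicy ε pihat α)).det)
    (hdet' : IsUnit (1 - γ • inducedMatrix P (policyOf ν) (mixedPolicy ε pihat α')).det) :
    Jobj P r γ ε ρ pihat ν α - Jobj P r γ ε ρ pihat ν α' =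
      ∑ s, occupancy P γ ρ (policyOf ν) (mixedPolicy ε pihat α') s *
        (ε * (∑ a, α (s, a) * attackerQ P r γ ε pihat ν α s a -
          ∑ a, α' (s, a) * attackerQ P r γ ε pihat ν α s a)) := by
  rw [Jobj_eq_dotProduct_value, Jobj_eq_dotProduct_value, performance_difference r ρ hdet hdet']
  refine Finset.sum_congr rfl fun s _ => congrArg _ ?_
  simp only [attackerQ, mixedPolicy, Finset.mul_sum, ← Finset.sum_sub_distrib]
  exact Finset.sum_congr rfl fun a _ => by ring

section Gradient

attribute [local instance] Matrix.linftyOpNormedRing Matrix.linftyOpNormedAlgebra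

theorem inner_gradient_Jobj {α : EuclideanSpace ℝ (S × Aa)}
    (hdet : IsUnit (1 - γ • inducedMatrix P (policyOf ν) (mixedPolicy ε pihat α)).det)
    (v : EuclideanSpace ℝ (S × Aa)) :
    ⟪gradient (fun x => Jobj P r γ ε ρ pihat ν x) α, v⟫ =
      ∑ s, occupancy P γ ρ (policyOf ν) (mixedPolicy ε pihat α) s *
        (ε * ∑ a, v (s, a) * attackerQ P r γ ε pihat ν α s a) := by
  have hA := ((hasFDerivAt_comp_mixedPolicy (inducedMatrixₗ P (policyOf ν)) ε pihat α).const_smul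
    γ).const_sub 1
  have hg := hasFDerivAt_comp_mixedPolicy (marginalRewardₗ r (policyOf ν)) ε pihat α
  rw [gradient, InnerProductSpace.toDual_symm_apply]
  -- `Jobj` unfolds to `(1 - γ • M y)⁻¹ *ᵥ ρ ⬝ᵥ r̄ y` with `M` and `r̄` affine in `y`.
  erw [fderiv_inv_mulVec_dotProduct hA hg hdet ρ v]
  set β := mixedPolicy ε pihat α
  set V := value P r γ (policyOf ν) β
  change occupancy P γ ρ (policyOf ν) β ⬝ᵥ (ε • marginalReward r (policyOf ν) (policyOf v)) -
    V ⬝ᵥ (-(γ • ε • inducedMatrix P (policyOf ν) (policyOf v)) *ᵥ occupancy P γ ρ (policyOf ν) β) =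
    _
  have hlookahead : ∀ s, ∑ a, v (s, a) * attackerQ P r γ ε pihat ν α s a =
      marginalReward r (policyOf ν) (policyOf v) s +
        γ * (V ᵥ* inducedMatrix P (policyOf ν) (policyOf v)) s := fun s =>
    (marginalReward_add_vecMul_inducedMatrix P r γ (policyOf ν) (policyOf v) V s).symm
  simp only [hlookahead, neg_mulVec, dotProduct_neg, sub_neg_eq_add, smul_mulVec, dotProduct_smul,
    dotProduct_mulVec, dotProduct_comm (V ᵥ* _)]
  simp only [dotProduct, smul_eq_mul, mul_add, Finset.sum_add_distrib, Finset.mul_sum]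
  congr 1 <;> exact Finset.sum_congr rfl fun _ _ => by ring

end Gradient

end

theorem attacker_gradient_domination_general {S Av Aa : Type*}
    [Fintype S] [Nonempty S] [DecidableEq S]
    [Fintype Av] [Fintype Aa] [Nonempty Aa]
    (P : S → Av → Aa → S → ℝ)
    (hP0 : ∀ s av aa s', 0 ≤ P s av aa s')
    (hP1 : ∀ s av aa, ∑ s', P s av aa s' = 1)
    (r : S → Av → Aa → ℝ)
    (γ : ℝ) (hγ0 : 0 ≤ γ) (hγ1 : γ < 1)
    (ρ : S → ℝ) (hρ0 : ∀ s, 0 < ρ s)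
    (pihat : S → Aa → ℝ)
    (hpihat0 : ∀ s a, 0 ≤ pihat s a) (hpihat1 : ∀ s, ∑ a, pihat s a = 1)
    (ε : ℝ) (hε0 : 0 ≤ ε) (hε1 : ε ≤ 1)
    (ν : EuclideanSpace ℝ (S × Av)) (α : EuclideanSpace ℝ (S × Aa))
    (hν : inPolicySimplex ν) (hα : inPolicySimplex α)
    (αstar : EuclideanSpace ℝ (S × Aa)) (hαstar : inPolicySimplex αstar) :
    Jobj P r γ ε ρ pihat ν α - Jobj P r γ ε ρ pihat ν αstar ≤
      (1 / (1 - γ)) *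
        (Finset.univ.sup' Finset.univ_nonempty fun s =>
          stateVisitation P γ ρ (fun s a => ν (s, a))
            (fun s a => (1 - ε) * pihat s a + ε * αstar (s, a)) s / ρ s) *
        sSup ((fun abar : EuclideanSpace ℝ (S × Aa) =>
          ⟪gradient (fun x => Jobj P r γ ε ρ pihat ν x) α, α - abar⟫) ''
            {x | inPolicySimplex x}) := by
  have hM : ∀ x, inPolicySimplex x →
      inducedMatrix P (policyOf ν) (mixedPolicy ε pihat x) ∈ colStochastic ℝ S := fun x hx =>
    inducedMatrix_mem_colStochastic_s17 hP0 hP1 hν.isPolicy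
      (IsPolicy.mix ⟨hpihat0, hpihat1⟩ hx.isPolicy hε0 hε1)
  have hdet := fun x hx => isUnit_det_one_sub_smul_of_mem_colStochastic (hM x hx) hγ0 hγ1
  have hρ_le : ∀ x, inPolicySimplex x →
      ∀ s, ρ s ≤ occupancy P γ ρ (policyOf ν) (mixedPolicy ε pihat x) s := fun x hx =>
    le_inv_one_sub_smul_mulVec_of_mem_colStochastic (hM x hx) hγ0 hγ1 fun s => (hρ0 s).le
  have hvisit := stateVisitation_eq_smul_occupancy (ρ := ρ) (hM αstar hαstar) hγ0 hγ1
  obtain ⟨abar, habar, hgreedy⟩ := exists_greedy_policy (attackerQ P r γ ε pihat ν α)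
  have hgrad : ⟪gradient (fun x => Jobj P r γ ε ρ pihat ν x) α, α - abar⟫ ≤ _ :=
    le_csSup (bddAbove_inner_sub_image_policySimplex _ α) ⟨abar, habar, rfl⟩
  rw [inner_gradient_Jobj (hdet α hα) (α - abar)] at hgrad
  simp only [PiLp.sub_apply, sub_mul, Finset.sum_sub_distrib] at hgrad
  have h1γ : 0 < 1 - γ := by linarith
  rw [Jobj_sub_Jobj (hdet α hα) (hdet αstar hαstar), mul_assoc, one_div_mul_eq_div,
    le_div_iff₀' h1γ]
  refine le_of_eq_of_le ?_ (sum_mul_le_sup'_div_mul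
    (f := fun s => ε * (∑ a, α (s, a) * attackerQ P r γ ε pihat ν α s a -
      ∑ a, αstar (s, a) * attackerQ P r γ ε pihat ν α s a))
    hρ0 (fun s => ?_) (hρ_le α hα) (fun s => ?_) (fun s => ?_) hgrad)
  -- The statement spells `policyOf ν` and `mixedPolicy ε pihat αstar` as lambdas.
  · erw [hvisit]
    simp only [Pi.smul_apply, smul_eq_mul, Finset.mul_sum, mul_assoc]
  · erw [hvisit]; exact mul_nonneg h1γ.le ((hρ0 s).le.trans (hρ_le αstar hαstar s))
  · exact mul_le_mul_of_nonneg_left (sub_le_sub_left (hgreedy αstar hαstar s) _) hε0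
  · exact mul_nonneg hε0 (sub_nonneg.2 (hgreedy α hα s))

/-- gradient domination for the attacker:
`J(ν,α) - min_{α'} J(ν,α') ≤ (1/(1-γ)) · max_s (d_ρ^{π_ν, mix(α*)}(s)/ρ(s)) ·
max_{ᾱ ∈ Δ} ⟨∇_α J(ν,α), α - ᾱ⟩`, for any minimizer `α*`. -/
theorem attacker_gradient_domination {S Av Aa : Type*}
    [Fintype S] [Nonempty S] [DecidableEq S]
    [Fintype Av] [Nonempty Av] [Fintype Aa] [Nonempty Aa]
    (P : S → Av → Aa → S → ℝ)
    (hP0 : ∀ s av aa s', 0 ≤ P s av aa s')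
    (hP1 : ∀ s av aa, ∑ s', P s av aa s' = 1)
    (r : S → Av → Aa → ℝ)
    (hr0 : ∀ s av aa, 0 ≤ r s av aa) (hr1 : ∀ s av aa, r s av aa ≤ 1)
    (γ : ℝ) (hγ0 : 0 ≤ γ) (hγ1 : γ < 1)
    (ρ : S → ℝ) (hρ0 : ∀ s, 0 < ρ s) (hρ1 : ∑ s, ρ s = 1)
    (pihat : S → Aa → ℝ)
    (hpihat0 : ∀ s a, 0 ≤ pihat s a) (hpihat1 : ∀ s, ∑ a, pihat s a = 1)
    (ε : ℝ) (hε0 : 0 ≤ ε) (hε1 : ε ≤ 1)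
    (ν : EuclideanSpace ℝ (S × Av)) (α : EuclideanSpace ℝ (S × Aa))
    (hν : inPolicySimplex ν) (hα : inPolicySimplex α)
    (αstar : EuclideanSpace ℝ (S × Aa)) (hαstar : inPolicySimplex αstar)
    (hαstarMin : ∀ α' : EuclideanSpace ℝ (S × Aa), inPolicySimplex α' →
      Jobj P r γ ε ρ pihat ν αstar ≤ Jobj P r γ ε ρ pihat ν α') :
    Jobj P r γ ε ρ pihat ν α - Jobj P r γ ε ρ pihat ν αstar ≤
      (1 / (1 - γ)) *
        (Finset.univ.sup' Finset.univ_nonempty fun s =>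
          stateVisitation P γ ρ (fun s a => ν (s, a))
            (fun s a => (1 - ε) * pihat s a + ε * αstar (s, a)) s / ρ s) *
        sSup ((fun abar : EuclideanSpace ℝ (S × Aa) =>
          ⟪gradient (fun x => Jobj P r γ ε ρ pihat ν x) α, α - abar⟫) ''
            {x | inPolicySimplex x}) :=
  attacker_gradient_domination_general P hP0 hP1 r γ hγ0 hγ1 ρ hρ0 pihat hpihat0 hpihat1 ε hε0 hε1 ν
    α hν hα αstar hαstar
end
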